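/- For jointly distributed discrete random variables M_1, Y_1-vector, W-vector with M_1 uniform of entropy N R_1 and Fano condition H(M_1 | Y_1^N) ≤ Nε, and with (M_1, W_{n+1}^N) independent of W_n for each n: N R_1 ≤ Σ_{n=1}^N [ I(V_{1,n} ; Y_{1,n}) - I(V_{1,n} ; W_n) ] + Nε, where V_{1,n} = (M_1, W_{n+1}^N, Y_1^{n-1}). -/

import Mathlib

open scoped BigOperators

/-- A probability mass function on a finite sample space. -/
def IsPMF {Ω : Type} [Fintype Ω] (p : Ω → ℝ) : Prop :=
  (∀ ω, 0 ≤ p ω) ∧ ∑ ω, p ω = 1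

/-- Probability that the discrete random variable `X` takes the value `x`. -/
noncomputable def pm {Ω : Type} [Fintype Ω] (p : Ω → ℝ) {α : Type} [DecidableEq α]
    (X : Ω → α) (x : α) : ℝ :=
  ∑ ω, if X ω = x then p ω else 0

/-- Shannon entropy (base 2) of a discrete random variable `X`. -/
noncomputable def ent {Ω : Type} [Fintype Ω] (p : Ω → ℝ) {α : Type} [Fintype α] [DecidableEq α]
    (X : Ω → α) : ℝ :=
  -∑ x, pm p X x * Real.logb 2 (pm p X x)

/-- Conditional Shannon entropy `H(X | Y)`. -/
noncomputable def cent {Ω : Type} [Fintype Ω] (p : Ω → ℝ) {α β : Type}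
    [Fintype α] [DecidableEq α] [Fintype β] [DecidableEq β]
    (X : Ω → α) (Y : Ω → β) : ℝ :=
  ent p (fun ω => (X ω, Y ω)) - ent p Y

/-- Mutual information `I(X ; Y)`. -/
noncomputable def mi {Ω : Type} [Fintype Ω] (p : Ω → ℝ) {α β : Type}
    [Fintype α] [DecidableEq α] [Fintype β] [DecidableEq β]
    (X : Ω → α) (Y : Ω → β) : ℝ :=
  ent p X - cent p X Y

/-- Conditional mutual information `I(X ; Y | Z) = H(X|Z) - H(X|Z,Y)`. -/
noncomputable def cmi {Ω : Type} [Fintype Ω] (p : Ω → ℝ) {α β γ : Type}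
    [Fintype α] [DecidableEq α] [Fintype β] [DecidableEq β] [Fintype γ] [DecidableEq γ]
    (X : Ω → α) (Y : Ω → β) (Z : Ω → γ) : ℝ :=
  cent p X Z - cent p X (fun ω => (Z ω, Y ω))

/-- Independence of two discrete random variables. -/
def IndepRV {Ω : Type} [Fintype Ω] (p : Ω → ℝ) {α β : Type} [DecidableEq α] [DecidableEq β]
    (X : Ω → α) (Y : Ω → β) : Prop :=
  ∀ x y, pm p (fun ω => (X ω, Y ω)) (x, y) = pm p X x * pm p Y y

/-- The strict prefix `(Y_1, …, Y_{n-1})` of a sequence of random variables. -/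
def pfx {Ω : Type} {N : ℕ} {α : Type} (Y : Fin N → Ω → α) (n : Fin N) :
    Ω → ({i : Fin N // i < n} → α) :=
  fun ω i => Y i.1 ω

/-- The strict suffix `(Y_{n+1}, …, Y_N)` of a sequence of random variables. -/
def sfx {Ω : Type} {N : ℕ} {α : Type} (Y : Fin N → Ω → α) (n : Fin N) :
    Ω → ({i : Fin N // n < i} → α) :=
  fun ω i => Y i.1 ω

/-! Write `V_n = (M₁, W_{>n}, Y_{<n})` and `C_k = H(M₁, Y_{<k}, W_{≥k})`. Since `(V_n, W_n)` carries
the same information as the `k = n` term and `(V_n, Y_n)` as the `k = n + 1` term,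
`I(V_n; Y_n) - I(V_n; W_n) = H(Y_n) - H(W_n) + C_n - C_{n+1}`, and the sum telescopes
(Csiszár's sum identity) to `∑ H(Y_n) - ∑ H(W_n) + H(M₁, W) - H(M₁, Y)`. Independence of `W_n` from
`(M₁, W_{>n})` turns the chain rule into `∑ H(W_n) = H(M₁, W) - H(M₁)`, and subadditivity gives
`∑ H(Y_n) ≥ H(Y)`. So the sum is at least `H(M₁) - H(M₁ | Y) ≥ N R₁ - N ε`. -/

open Finset Real

section Entropy

variable {Ω : Type} [Fintype Ω] {p : Ω → ℝ} {α β : Type}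
  [Fintype α] [DecidableEq α] [Fintype β] [DecidableEq β]

lemma sum_pm_mul (X : Ω → α) (φ : α → ℝ) :
    ∑ x, pm p X x * φ x = ∑ ω, p ω * φ (X ω) := by
  simp only [pm, sum_mul, ite_mul, zero_mul]
  rw [sum_comm]
  simp

lemma sum_pm (hp : IsPMF p) (X : Ω → α) : ∑ x, pm p X x = 1 := by
  simpa [hp.2] using sum_pm_mul (p := p) X (fun _ => 1)

omit [Fintype α] in
lemma pm_nonneg (hp : IsPMF p) (X : Ω → α) (x : α) : 0 ≤ pm p X x :=
  sum_nonneg fun ω _ => by split_ifs <;> simp [hp.1 ω]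

omit [Fintype α] in
lemma le_pm_apply (hp : IsPMF p) (X : Ω → α) (ω : Ω) : p ω ≤ pm p X (X ω) := by
  have h := single_le_sum (f := fun ω' => if X ω' = X ω then p ω' else 0)
    (fun ω' _ => by split_ifs <;> simp [hp.1 ω']) (mem_univ ω)
  exact (le_of_eq (if_pos rfl).symm).trans h

omit [Fintype α] in
lemma pm_apply_pos (hp : IsPMF p) (X : Ω → α) {ω : Ω} (hω : p ω ≠ 0) : 0 < pm p X (X ω) :=
  (lt_of_le_of_ne (hp.1 ω) (Ne.symm hω)).trans_le (le_pm_apply hp X ω)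

lemma ent_eq_neg_sum (X : Ω → α) : ent p X = -∑ ω, p ω * logb 2 (pm p X (X ω)) :=
  congrArg Neg.neg (sum_pm_mul X _)

lemma ent_eq_of_determine_each_other {X : Ω → α} {Z : Ω → β} (f : α → β) (g : β → α)
    (hf : ∀ ω, f (X ω) = Z ω) (hg : ∀ ω, g (Z ω) = X ω) : ent p X = ent p Z := by
  have hpm : ∀ ω, pm p X (X ω) = pm p Z (Z ω) := fun ω =>
    sum_congr rfl fun ω' _ => by
      refine if_congr ⟨fun h => ?_, fun h => ?_⟩ rfl rfl
      · rw [← hf, ← hf, h]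
      · rw [← hg, ← hg, h]
  simp only [ent_eq_neg_sum, hpm]

lemma ent_eq_zero_of_subsingleton [Subsingleton α] (hp : IsPMF p) (X : Ω → α) :
    ent p X = 0 := by
  have hpm : ∀ ω, pm p X (X ω) = 1 := fun ω => by
    simp [pm, Subsingleton.elim (X _) (X ω), hp.2]
  simp [ent_eq_neg_sum, hpm]

lemma sum_mul_div_pm_le (hp : IsPMF p) (X : Ω → α) {f : α → ℝ} (hf : ∀ x, 0 ≤ f x) :
    ∑ ω, p ω * (f (X ω) / pm p X (X ω)) ≤ ∑ x, f x := by
  rw [← sum_pm_mul X (fun x => f x / pm p X x)]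
  refine sum_le_sum fun x _ => ?_
  rcases (pm_nonneg hp X x).eq_or_lt with h | h
  · simp [← h, hf x]
  · rw [mul_div_cancel₀ _ h.ne']

lemma mul_logb_two_le_of_pos {t x : ℝ} (ht : 0 ≤ t) (hx : 0 < x) :
    t * logb 2 x ≤ (t * x - t) / log 2 := by
  rw [logb, ← mul_div_assoc, ← mul_sub_one]
  exact div_le_div_of_nonneg_right (mul_le_mul_of_nonneg_left (log_le_sub_one_of_pos hx) ht)
    (log_pos one_lt_two).le

lemma ent_pair_le_add (hp : IsPMF p) (X : Ω → α) (Y : Ω → β) :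
    ent p (fun ω => (X ω, Y ω)) ≤ ent p X + ent p Y := by
  have hterm : ∀ ω, p ω * (logb 2 (pm p X (X ω)) + logb 2 (pm p Y (Y ω))
        - logb 2 (pm p (fun ω => (X ω, Y ω)) (X ω, Y ω)))
      ≤ (p ω * (pm p X (X ω) * pm p Y (Y ω) / pm p (fun ω => (X ω, Y ω)) (X ω, Y ω))
        - p ω) / log 2 := fun ω => by
    rcases eq_or_ne (p ω) 0 with h0 | h0
    · simp [h0]
    have ha := pm_apply_pos hp X h0
    have hb := pm_apply_pos hp Y h0
    have hq := pm_apply_pos hp (fun ω => (X ω, Y ω)) h0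
    rw [← logb_mul ha.ne' hb.ne', ← logb_div (by positivity) hq.ne']
    exact mul_logb_two_le_of_pos (hp.1 ω) (by positivity)
  have hgibbs : ∑ ω, p ω * (pm p X (X ω) * pm p Y (Y ω)
      / pm p (fun ω => (X ω, Y ω)) (X ω, Y ω)) ≤ 1 :=
    calc _ ≤ ∑ xy : α × β, pm p X xy.1 * pm p Y xy.2 :=
          sum_mul_div_pm_le hp (fun ω => (X ω, Y ω))
            fun xy => mul_nonneg (pm_nonneg hp X _) (pm_nonneg hp Y _)
      _ = 1 := by
          rw [Fintype.sum_prod_type, ← sum_mul_sum, sum_pm hp, sum_pm hp, one_mul]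
  have hsum := sum_le_sum fun ω (_ : ω ∈ univ) => hterm ω
  rw [← sum_div, sum_sub_distrib, hp.2] at hsum
  have hnonpos := div_nonpos_of_nonpos_of_nonneg (sub_nonpos.2 hgibbs) (log_pos one_lt_two).le
  simp only [mul_sub, mul_add, sum_add_distrib, sum_sub_distrib] at hsum
  rw [ent_eq_neg_sum, ent_eq_neg_sum, ent_eq_neg_sum]
  linarith

lemma IndepRV.ent_pair_eq_add (hp : IsPMF p) {X : Ω → α} {Y : Ω → β} (h : IndepRV p X Y) :
    ent p (fun ω => (X ω, Y ω)) = ent p X + ent p Y := by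
  simp only [ent_eq_neg_sum, h _ _, ← neg_add, ← sum_add_distrib]
  congr 1
  refine sum_congr rfl fun ω _ => ?_
  rcases eq_or_ne (p ω) 0 with h0 | h0
  · simp [h0]
  rw [logb_mul (pm_apply_pos hp X h0).ne' (pm_apply_pos hp Y h0).ne', mul_add]

end Entropy

section Hybrid

set_option synthInstance.maxSize 2000

variable {Ω : Type} [Fintype Ω] {p : Ω → ℝ} {N : ℕ} {α β γ : Type}
  [Fintype α] [DecidableEq α] [Fintype β] [DecidableEq β] [Fintype γ] [DecidableEq γ]

def hybrid (X : Fin N → Ω → α) (Y : Fin N → Ω → β) (k : ℕ) (ω : Ω) :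
    ({i : Fin N // (i : ℕ) < k} → α) × ({i : Fin N // k ≤ (i : ℕ)} → β) :=
  (fun i => X i.1 ω, fun i => Y i.1 ω)

variable (Z : Ω → γ) (X : Fin N → Ω → α) (Y : Fin N → Ω → β)

lemma ent_hybrid_eq (n : Fin N) :
    ent p (fun ω => ((Z ω, sfx Y n ω, pfx X n ω), Y n ω)) =
      ent p (fun ω => (Z ω, hybrid X Y n ω)) := by
  refine ent_eq_of_determine_each_other
    (fun q => (q.1.1, fun i => q.1.2.2 ⟨i.1, i.2⟩,
      fun i => if h : n < i.1 then q.1.2.1 ⟨i.1, h⟩ else q.2))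
    (fun q => ((q.1, fun i => q.2.2 ⟨i.1, i.2.le⟩, fun i => q.2.1 ⟨i.1, i.2⟩), q.2.2 ⟨n, le_rfl⟩))
    (fun ω => ?_) (fun ω => rfl)
  ext i
  · rfl
  · rfl
  · dsimp only [hybrid, sfx]
    split_ifs with h
    · rfl
    · rw [show i.1 = n from Fin.ext (le_antisymm (not_lt.1 h) i.2)]

lemma ent_hybrid_succ_eq (n : Fin N) :
    ent p (fun ω => ((Z ω, sfx Y n ω, pfx X n ω), X n ω)) =
      ent p (fun ω => (Z ω, hybrid X Y (n + 1) ω)) := by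
  refine ent_eq_of_determine_each_other
    (fun q => (q.1.1, fun i => if h : i.1 < n then q.1.2.2 ⟨i.1, h⟩ else q.2,
      fun i => q.1.2.1 ⟨i.1, i.2⟩))
    (fun q => ((q.1, fun i => q.2.2 ⟨i.1, i.2⟩, fun i => q.2.1 ⟨i.1, Nat.lt_succ_of_lt i.2⟩),
      q.2.1 ⟨n, Nat.lt_succ_self _⟩))
    (fun ω => ?_) (fun ω => rfl)
  ext i
  · rfl
  · dsimp only [hybrid, pfx]
    split_ifs with h
    · rfl
    · rw [show i.1 = n from Fin.ext (le_antisymm (Nat.lt_succ_iff.1 i.2) (not_lt.1 h))]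
  · rfl

lemma ent_hybrid_zero :
    ent p (fun ω => (Z ω, hybrid X Y 0 ω)) = ent p (fun ω => (Z ω, fun i => Y i ω)) :=
  ent_eq_of_determine_each_other (fun q => (q.1, fun i => q.2.2 ⟨i, Nat.zero_le _⟩))
    (fun q => (q.1, fun i => absurd i.2 (Nat.not_lt_zero _), fun i => q.2 i.1))
    (fun _ => rfl)
    (fun _ => Prod.ext rfl (Prod.ext (funext fun i => absurd i.2 (Nat.not_lt_zero _)) rfl))

lemma ent_hybrid_card :
    ent p (fun ω => (Z ω, hybrid X Y N ω)) = ent p (fun ω => (Z ω, fun i => X i ω)) :=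
  ent_eq_of_determine_each_other (fun q => (q.1, fun i => q.2.1 ⟨i, i.2⟩))
    (fun q => (q.1, fun i => q.2 i.1, fun i => absurd i.2 (not_le.2 i.1.2)))
    (fun _ => rfl)
    (fun _ => Prod.ext rfl (Prod.ext rfl (funext fun i => absurd i.2 (not_le.2 i.1.2))))

theorem sum_ent_hybrid_sub :
    ∑ n : Fin N, (ent p (fun ω => ((Z ω, sfx Y n ω, pfx X n ω), Y n ω)) -
        ent p (fun ω => ((Z ω, sfx Y n ω, pfx X n ω), X n ω))) =
      ent p (fun ω => (Z ω, fun i => Y i ω)) - ent p (fun ω => (Z ω, fun i => X i ω)) := by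
  let c : ℕ → ℝ := fun k => ent p (fun ω => (Z ω, hybrid X Y k ω))
  rw [← ent_hybrid_zero Z X Y, ← ent_hybrid_card Z X Y]
  simp only [ent_hybrid_eq, ent_hybrid_succ_eq]
  exact (Fin.sum_univ_eq_sum_range (fun k => c k - c (k + 1)) N).trans (sum_range_sub' c N)

end Hybrid

section ChainRule

set_option synthInstance.maxSize 2000

variable {Ω : Type} [Fintype Ω] {p : Ω → ℝ} {N : ℕ} {α β γ : Type}
  [Fintype α] [DecidableEq α] [Fintype β] [DecidableEq β] [Fintype γ] [DecidableEq γ]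

theorem sum_ent_sfx_chain (Z : Ω → γ) (W : Fin N → Ω → β) :
    ∑ n : Fin N,
        (ent p (fun ω => ((Z ω, sfx W n ω), W n ω)) - ent p (fun ω => (Z ω, sfx W n ω))) =
      ent p (fun ω => (Z ω, fun i => W i ω)) - ent p Z := by
  have h := sum_ent_hybrid_sub (p := p) Z (fun _ _ => ()) W
  have hZ : ent p (fun ω => (Z ω, fun _ : Fin N => ())) = ent p Z :=
    ent_eq_of_determine_each_other Prod.fst (fun z => (z, fun _ => ()))
      (fun _ => rfl) (fun _ => rfl)
  rw [hZ] at h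
  rw [← h]
  refine sum_congr rfl fun n _ => ?_
  congr 1
  · exact ent_eq_of_determine_each_other (fun q => ((q.1.1, q.1.2, fun _ => ()), q.2))
      (fun q => ((q.1.1, q.1.2.1), q.2)) (fun _ => rfl) (fun _ => rfl)
  · exact ent_eq_of_determine_each_other (fun q => ((q.1, q.2, fun _ => ()), ()))
      (fun q => (q.1.1, q.1.2.1)) (fun _ => rfl) (fun _ => rfl)

theorem ent_pi_le_sum (hp : IsPMF p) (X : Fin N → Ω → α) :
    ent p (fun ω i => X i ω) ≤ ∑ n, ent p (X n) := by
  have h := sum_ent_sfx_chain (p := p) (fun _ => ()) X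
  have hunit : ent p (fun ω => ((), fun i => X i ω)) = ent p (fun ω i => X i ω) :=
    ent_eq_of_determine_each_other Prod.snd (fun v => ((), v)) (fun _ => rfl) (fun _ => rfl)
  rw [hunit, ent_eq_zero_of_subsingleton hp (fun _ => ()), sub_zero] at h
  rw [← h]
  exact sum_le_sum fun n _ => by linarith [ent_pair_le_add hp (fun ω => ((), sfx X n ω)) (X n)]

end ChainRule

set_option synthInstance.maxSize 2000 in
theorem classI_single_rate_converse {Ω : Type} [Fintype Ω] {N : ℕ} {μ α σ : Type}
    [Fintype μ] [DecidableEq μ] [Fintype α] [DecidableEq α] [Fintype σ] [DecidableEq σ]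
    (p : Ω → ℝ) (hp : IsPMF p) (M₁ : Ω → μ) (Y : Fin N → Ω → α) (W : Fin N → Ω → σ)
    (R₁ ε : ℝ)
    (hent : ent p M₁ = (N : ℝ) * R₁)
    (hfano : cent p M₁ (fun ω => (fun i : Fin N => Y i ω)) ≤ (N : ℝ) * ε)
    (hind : ∀ n : Fin N, IndepRV p (fun ω => (M₁ ω, sfx W n ω)) (W n)) :
    (N : ℝ) * R₁ ≤
      (∑ n : Fin N,
        (mi p (fun ω => (M₁ ω, sfx W n ω, pfx Y n ω)) (Y n) -
         mi p (fun ω => (M₁ ω, sfx W n ω, pfx Y n ω)) (W n))) + (N : ℝ) * ε := by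
  have hsplit : ∑ n : Fin N,
      (mi p (fun ω => (M₁ ω, sfx W n ω, pfx Y n ω)) (Y n) -
        mi p (fun ω => (M₁ ω, sfx W n ω, pfx Y n ω)) (W n)) =
      ∑ n, ent p (Y n) - ∑ n, ent p (W n) +
        ∑ n : Fin N, (ent p (fun ω => ((M₁ ω, sfx W n ω, pfx Y n ω), W n ω)) -
          ent p (fun ω => ((M₁ ω, sfx W n ω, pfx Y n ω), Y n ω))) := by
    rw [← sum_sub_distrib, ← sum_add_distrib]
    exact sum_congr rfl fun n _ => by simp only [mi, cent]; ring
  have hW : ∑ n, ent p (W n) = ent p (fun ω => (M₁ ω, fun i => W i ω)) - ent p M₁ := by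
    rw [← sum_ent_sfx_chain]
    exact sum_congr rfl fun n _ => by rw [(hind n).ent_pair_eq_add hp]; ring
  rw [hsplit, hW, sum_ent_hybrid_sub]
  unfold cent at hfano
  linarith [ent_pi_le_sum hp Y]
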